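/- Let 𝒳 = (M, X, ⊥) be a deterministic concurrent system and α ∈ X. Define the sequence of cliques c₁ = Σ_α and inductively c_{i+1} = Σ_{α_i} where α_i = α·(c₁·…·c_i). Then (c_i) is a normal sequence (each (c_i, c_{i+1}) is a normal pair), and every execution x ∈ M_α with normal form (d₁,…,d_k) satisfies d_j ≤ c_j for all j; i.e., the resulting generalized execution T_α is the maximum of all executions from α. -/

import Mathlib

namespace TraceDoc

/-- The elementary commutation relation on the free monoid induced by an
independence relation `I`. -/
def traceRel {S : Type*} (I : S → S → Prop) : FreeMonoid S → FreeMonoid S → Prop :=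
  fun u v => ∃ a b, I a b ∧ u = FreeMonoid.of a * FreeMonoid.of b ∧
    v = FreeMonoid.of b * FreeMonoid.of a

/-- The congruence on the free monoid generated by the commutations of `I`. -/
def traceCon {S : Type*} (I : S → S → Prop) : Con (FreeMonoid S) := conGen (traceRel I)

/-- The trace monoid `M(Σ, I)`. -/
abbrev TraceMonoid {S : Type*} (I : S → S → Prop) := (traceCon I).Quotient

/-- Canonical projection from words to traces. -/
def tproj {S : Type*} (I : S → S → Prop) : FreeMonoid S →* TraceMonoid I := (traceCon I).mk'

/-- Image of a letter in the trace monoid. -/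
def temb {S : Type*} (I : S → S → Prop) (a : S) : TraceMonoid I := tproj I (FreeMonoid.of a)

/-- Any monoid hom to a commutative monoid factors through the trace congruence. -/
lemma traceCon_le_ker {S N : Type*} [CommMonoid N] (I : S → S → Prop)
    (f : FreeMonoid S →* N) : traceCon I ≤ Con.ker f := by
  apply Con.conGen_le.2
  rintro u v ⟨a, b, _, rfl, rfl⟩
  simp [Con.ker_rel, map_mul, mul_comm]

/-- Length of a trace (well defined since commutations preserve length). -/
def tlen {S : Type*} (I : S → S → Prop) : TraceMonoid I → ℕ := fun x =>
  Multiplicative.toAdd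
    (Con.lift _ (FreeMonoid.lift fun _ : S => Multiplicative.ofAdd (1 : ℕ))
      (traceCon_le_ker I _) x)

/-- Number of occurrences of the letter `a` in a trace (well defined). -/
def tcount {S : Type*} [DecidableEq S] (I : S → S → Prop) (a : S) : TraceMonoid I → ℕ := fun x =>
  Multiplicative.toAdd
    (Con.lift _ (FreeMonoid.lift fun b : S =>
        Multiplicative.ofAdd (if b = a then (1 : ℕ) else 0))
      (traceCon_le_ker I _) x)

/-- Left divisibility in a trace monoid. -/
def tle {S : Type*} (I : S → S → Prop) (x y : TraceMonoid I) : Prop := ∃ z, y = x * z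

/-- A clique: a finite set of pairwise independent letters. -/
def IsClique {S : Type*} (I : S → S → Prop) (s : Finset S) : Prop := (↑s : Set S).Pairwise I

/-- The type of cliques of the trace monoid. -/
abbrev Clique {S : Type*} (I : S → S → Prop) := {s : Finset S // IsClique I s}

lemma temb_commute {S : Type*} {I : S → S → Prop} {a b : S} (h : I a b) :
    Commute (temb I a) (temb I b) := by
  have : (traceCon I) (FreeMonoid.of a * FreeMonoid.of b) (FreeMonoid.of b * FreeMonoid.of a) :=
    ConGen.Rel.of _ _ ⟨a, b, h, rfl, rfl⟩
  simpa [Commute, SemiconjBy, temb, tproj, ← map_mul] using (traceCon I).eq.2 this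

/-- The product of a clique in the trace monoid. -/
def cprod {S : Type*} (I : S → S → Prop) (c : Clique I) : TraceMonoid I :=
  c.1.noncommProd (temb I) (fun a ha b hb hab => temb_commute (c.2 ha hb hab))

/-- The Cartier–Foata normality relation `c → d` between cliques. -/
def NormalPair {S : Type*} (I : S → S → Prop) (c d : Clique I) : Prop :=
  ∀ b ∈ d.1, ∃ a ∈ c.1, ¬ I a b

/-- A concurrent system: a right action of the trace monoid on the states
`X` together with a sink `⊥` (modelled by `none`). -/
structure ConcurrentSystem {S : Type*} (I : S → S → Prop) (X : Type*) where
  act : Option X → TraceMonoid I → Option X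
  act_one : ∀ α, act α 1 = α
  act_mul : ∀ α x y, act α (x * y) = act (act α x) y
  act_bot : ∀ x, act none x = none

/-- The set `M_α` of executions from state `α`. -/
def ConcurrentSystem.execs {S : Type*} {I : S → S → Prop} {X : Type*}
    (C : ConcurrentSystem I X) (α : X) : Set (TraceMonoid I) :=
  {x | C.act (some α) x ≠ none}


section Aux
variable {S : Type*} {I : S → S → Prop}

lemma traceCon_iff {u v : FreeMonoid S} : traceCon I u v ↔ ConGen.Rel (traceRel I) u v :=
  Iff.rfl

lemma tproj_surjective : Function.Surjective (tproj I (S := S)) := Con.mk'_surjective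

lemma tproj_eq_iff {u v : FreeMonoid S} : tproj I u = tproj I v ↔ traceCon I u v :=
  ⟨fun h => (traceCon I).eq.1 h, fun h => (traceCon I).eq.2 h⟩

section Count
variable [DecidableEq S]

lemma tcount_mul (a : S) (x y : TraceMonoid I) :
    tcount I a (x * y) = tcount I a x + tcount I a y := by
  unfold tcount; rw [map_mul]; rfl

lemma tcount_temb (a b : S) : tcount I a (temb I b) = if b = a then 1 else 0 := by
  unfold tcount temb tproj
  rw [Con.lift_mk', FreeMonoid.lift_eval_of]
  rfl

lemma tcount_pos_of_tle {a : S} {x : TraceMonoid I} (h : tle I (temb I a) x) :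
    0 < tcount I a x := by
  obtain ⟨z, rfl⟩ := h
  rw [tcount_mul, tcount_temb]
  simp

lemma tcount_one (a : S) : tcount I a (1 : TraceMonoid I) = 0 := by
  unfold tcount; rw [map_one]; rfl

lemma tproj_of (b : S) : tproj I (FreeMonoid.of b) = temb I b := rfl

lemma tcount_tproj_pos_iff {a : S} {u : FreeMonoid S} :
    0 < tcount I a (tproj I u) ↔ a ∈ FreeMonoid.toList u := by
  induction u using FreeMonoid.recOn with
  | one => simp [tcount_one, FreeMonoid.toList_one]
  | of_mul b u ih =>
    rw [map_mul, tcount_mul, tproj_of, tcount_temb, FreeMonoid.toList_mul,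
      FreeMonoid.toList_of]
    by_cases hba : b = a
    · simp [hba]
    · simp only [hba, if_false, Nat.zero_add, List.singleton_append, List.mem_cons, ih]
      exact ⟨Or.inr, fun h => h.resolve_left fun h' => hba h'.symm⟩

end Count

/-- A word has letter `a` available at the front: some occurrence of `a`
is preceded only by letters independent of `a`. -/
def WDiv (I : S → S → Prop) (a : S) (u : List S) : Prop :=
  ∃ u1 u2 : List S, u = u1 ++ a :: u2 ∧ ∀ b ∈ u1, I b a

lemma wdiv_append {a : S} {u v : List S} :
    WDiv I a (u ++ v) ↔ WDiv I a u ∨ ((∀ b ∈ u, I b a) ∧ WDiv I a v) := by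
  constructor
  · rintro ⟨u1, u2, h, hind⟩
    rcases List.append_eq_append_iff.mp h with ⟨w, hw1, hw2⟩ | ⟨w, hw1, hw2⟩
    · subst hw1 hw2
      exact Or.inr ⟨fun b hb => hind b (List.mem_append_left _ hb),
        w, u2, rfl, fun b hb => hind b (List.mem_append_right _ hb)⟩
    · rcases w with _ | ⟨c, w⟩
      · simp only [List.append_nil] at hw1
        simp only [List.nil_append] at hw2
        subst hw1
        exact Or.inr ⟨hind, [], u2, hw2.symm, by simp⟩
      · rw [List.cons_append] at hw2
        injection hw2 with hca hv
        subst hca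
        exact Or.inl ⟨u1, w, hw1, hind⟩
  · rintro (⟨u1, u2, rfl, hind⟩ | ⟨hu, u1, u2, rfl, hind⟩)
    · exact ⟨u1, u2 ++ v, by simp, hind⟩
    · exact ⟨u ++ u1, u2, by simp, by
        intro b hb
        rcases List.mem_append.mp hb with hb | hb
        exacts [hu b hb, hind b hb]⟩

lemma wdiv_pair {a b c : S} : WDiv I a [b, c] ↔ a = b ∨ (a = c ∧ I b a) := by
  constructor
  · rintro ⟨u1, u2, h, hind⟩
    rcases u1 with _ | ⟨x, u1⟩
    · injection h with h1 _
      exact Or.inl h1.symm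
    · rcases u1 with _ | ⟨y, u1⟩
      · injection h with h1 h2
        injection h2 with h3 _
        refine Or.inr ⟨h3.symm, ?_⟩
        have := hind x (by simp)
        rwa [← h1] at this
      · exfalso
        have := congrArg List.length h
        simp at this
  · rintro (rfl | ⟨rfl, hba⟩)
    · exact ⟨[], [c], rfl, by simp⟩
    · exact ⟨[b], [], rfl, by simpa⟩

lemma mem_invariant {u v : FreeMonoid S} (h : traceCon I u v) (a : S) :
    a ∈ FreeMonoid.toList u ↔ a ∈ FreeMonoid.toList v := by
  classical
  rw [← tcount_tproj_pos_iff (I := I), ← tcount_tproj_pos_iff (I := I),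
    tproj_eq_iff.mpr h]

lemma wdiv_invariant (hsym : Symmetric I) {u v : FreeMonoid S}
    (h : ConGen.Rel (traceRel I) u v) (a : S) :
    WDiv I a (FreeMonoid.toList u) ↔ WDiv I a (FreeMonoid.toList v) := by
  induction h with
  | of u v huv =>
    obtain ⟨b, c, hbc, rfl, rfl⟩ := huv
    show WDiv I a [b, c] ↔ WDiv I a [c, b]
    rw [wdiv_pair, wdiv_pair]
    constructor
    · rintro (rfl | ⟨rfl, hba⟩)
      · exact Or.inr ⟨rfl, hsym hbc⟩
      · exact Or.inl rfl
    · rintro (rfl | ⟨rfl, hca⟩)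
      · exact Or.inr ⟨rfl, hbc⟩
      · exact Or.inl rfl
  | refl x => exact Iff.rfl
  | symm _ ih => exact ih.symm
  | trans _ _ ih1 ih2 => exact ih1.trans ih2
  | mul h1 h2 ih1 ih2 =>
    rename_i u1 v1 u2 v2
    rw [FreeMonoid.toList_mul, FreeMonoid.toList_mul, wdiv_append, wdiv_append]
    have hm : ∀ b, b ∈ FreeMonoid.toList u1 ↔ b ∈ FreeMonoid.toList v1 :=
      mem_invariant (traceCon_iff.mpr h1)
    rw [ih1, ih2]
    constructor
    · rintro (h | ⟨hall, h⟩)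
      · exact Or.inl h
      · exact Or.inr ⟨fun b hb => hall b ((hm b).mpr hb), h⟩
    · rintro (h | ⟨hall, h⟩)
      · exact Or.inl h
      · exact Or.inr ⟨fun b hb => hall b ((hm b).mp hb), h⟩

lemma traceCon_front (a : S) (u1 u2 : List S) (h : ∀ b ∈ u1, I b a) :
    traceCon I (FreeMonoid.ofList (u1 ++ a :: u2)) (FreeMonoid.ofList (a :: (u1 ++ u2))) := by
  induction u1 with
  | nil => exact (traceCon I).refl _
  | cons b u1 ih =>
    have h1 : traceCon I (FreeMonoid.ofList (b :: (u1 ++ a :: u2)))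
        (FreeMonoid.of b * FreeMonoid.ofList (a :: (u1 ++ u2))) := by
      rw [FreeMonoid.ofList_cons]
      exact (traceCon I).mul ((traceCon I).refl _) (ih fun c hc => h c (by simp [hc]))
    refine (traceCon I).trans h1 ?_
    have hswap : traceCon I (FreeMonoid.of b * FreeMonoid.of a)
        (FreeMonoid.of a * FreeMonoid.of b) :=
      ConGen.Rel.of _ _ ⟨b, a, h b (by simp), rfl, rfl⟩
    have : traceCon I ((FreeMonoid.of b * FreeMonoid.of a) * FreeMonoid.ofList (u1 ++ u2))
        ((FreeMonoid.of a * FreeMonoid.of b) * FreeMonoid.ofList (u1 ++ u2)) :=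
      (traceCon I).mul hswap ((traceCon I).refl _)
    simpa [FreeMonoid.ofList_cons, mul_assoc] using this

lemma tle_temb_tproj_iff (hsym : Symmetric I) {a : S} {u : FreeMonoid S} :
    tle I (temb I a) (tproj I u) ↔ WDiv I a (FreeMonoid.toList u) := by
  constructor
  · rintro ⟨z, hz⟩
    obtain ⟨w, rfl⟩ := tproj_surjective z
    have : tproj I u = tproj I (FreeMonoid.of a * w) := by
      rw [map_mul]; exact hz
    have hcon := tproj_eq_iff.mp this
    rw [wdiv_invariant hsym (traceCon_iff.mp hcon) a]
    exact ⟨[], FreeMonoid.toList w, rfl, by simp⟩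
  · rintro ⟨u1, u2, hu, hind⟩
    have hcon : traceCon I u (FreeMonoid.ofList (a :: (u1 ++ u2))) := by
      have : u = FreeMonoid.ofList (u1 ++ a :: u2) := hu
      rw [this]
      exact traceCon_front a u1 u2 hind
    refine ⟨tproj I (FreeMonoid.ofList (u1 ++ u2)), ?_⟩
    rw [tproj_eq_iff.mpr hcon, FreeMonoid.ofList_cons, map_mul]
    rfl

section Division
variable [DecidableEq S]

lemma tle_temb_mul (hsym : Symmetric I) {a : S} {x y : TraceMonoid I}
    (h : tle I (temb I a) (x * y)) :
    tle I (temb I a) x ∨ ((∀ b, 0 < tcount I b x → I b a) ∧ tle I (temb I a) y) := by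
  obtain ⟨u, rfl⟩ := tproj_surjective x
  obtain ⟨v, rfl⟩ := tproj_surjective y
  rw [← map_mul] at h
  rw [tle_temb_tproj_iff hsym, FreeMonoid.toList_mul, wdiv_append] at h
  rcases h with h | ⟨hall, h⟩
  · exact Or.inl ((tle_temb_tproj_iff hsym).mpr h)
  · refine Or.inr ⟨fun b hb => hall b (tcount_tproj_pos_iff.mp hb), ?_⟩
    exact (tle_temb_tproj_iff hsym).mpr h

lemma isClique_mono {s t : Finset S} (h : IsClique I s) (hts : t ⊆ s) : IsClique I t :=
  Set.Pairwise.mono (Finset.coe_subset.mpr hts) h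

lemma cprod_eq_mul_erase {c : Clique I} {a : S} (ha : a ∈ c.1) :
    cprod I c = temb I a *
      cprod I ⟨c.1.erase a, isClique_mono c.2 (Finset.erase_subset a c.1)⟩ := by
  unfold cprod
  rw [Finset.noncommProd_congr (Finset.insert_erase ha).symm (fun x _ => rfl)
    (fun x hx y hy hxy => temb_commute (c.2 (by
      have := Finset.insert_erase ha
      exact this ▸ hx) (by
      have := Finset.insert_erase ha
      exact this ▸ hy) hxy))]
  exact Finset.noncommProd_insert_of_notMem _ _ _ _ (Finset.notMem_erase a c.1)

lemma tle_temb_cprod {c : Clique I} {a : S} (ha : a ∈ c.1) :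
    tle I (temb I a) (cprod I c) :=
  ⟨_, cprod_eq_mul_erase ha⟩

lemma tcount_cprod (a : S) (c : Clique I) :
    tcount I a (cprod I c) = if a ∈ c.1 then 1 else 0 := by
  obtain ⟨s, hs⟩ := c
  induction s using Finset.induction_on with
  | empty => rw [show cprod I ⟨∅, hs⟩ = 1 from rfl]; simp [cprod, tcount_one]
  | @insert a' s ha' ih =>
    have hstep : cprod I ⟨insert a' s, hs⟩ = temb I a' *
        cprod I ⟨s, isClique_mono hs (Finset.subset_insert a' s)⟩ :=
      Finset.noncommProd_insert_of_notMem s a' (temb I) _ ha'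
    rw [hstep, tcount_mul, tcount_temb, ih (isClique_mono hs (Finset.subset_insert a' s))]
    by_cases h1 : a' = a
    · subst h1; simp [ha']
    · simp only [Finset.mem_insert]
      have : ¬ a = a' := fun h => h1 h.symm
      simp [this, h1]

lemma mem_of_tle_temb_cprod {c : Clique I} {a : S} (h : tle I (temb I a) (cprod I c)) :
    a ∈ c.1 := by
  by_contra hna
  have := tcount_pos_of_tle h
  rw [tcount_cprod] at this
  simp [hna] at this

lemma cprod_union {s t : Finset S} (hd : Disjoint s t) (h : IsClique I (s ∪ t)) :
    cprod I ⟨s ∪ t, h⟩ = cprod I ⟨s, isClique_mono h Finset.subset_union_left⟩ *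
      cprod I ⟨t, isClique_mono h Finset.subset_union_right⟩ :=
  Finset.noncommProd_union_of_disjoint hd (temb I) _

lemma commute_cprod (hsym : Symmetric I) {c d : Clique I}
    (h : ∀ a ∈ c.1, ∀ b ∈ d.1, I a b) : Commute (cprod I c) (cprod I d) :=
  Finset.noncommProd_commute _ _ _ _ (fun b hb =>
    (Finset.noncommProd_commute _ _ _ _
      (fun a ha => temb_commute (hsym (h a ha b hb)))).symm)

lemma commute_cprod_temb (hsym : Symmetric I) {c : Clique I} {b : S}
    (h : ∀ a ∈ c.1, I a b) : Commute (cprod I c) (temb I b) :=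
  (Finset.noncommProd_commute _ _ _ _
    (fun a ha => temb_commute (hsym (h a ha)))).symm

end Division

section Sys
variable {X : Type*} (C : ConcurrentSystem I X)

lemma act_ne_none_left {γ : Option X} {x y : TraceMonoid I}
    (h : C.act γ (x * y) ≠ none) : C.act γ x ≠ none := by
  intro hx
  rw [C.act_mul, hx, C.act_bot] at h
  exact h rfl

lemma exec_of_tle {γ : Option X} {x y : TraceMonoid I} (hle : tle I x y)
    (h : C.act γ y ≠ none) : C.act γ x ≠ none := by
  obtain ⟨z, rfl⟩ := hle; exact act_ne_none_left C h

variable [DecidableEq S] (hsym : Symmetric I)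
variable (hdet : ∀ (α : X) (x y : TraceMonoid I), x ∈ C.execs α → y ∈ C.execs α →
      ∃ z ∈ C.execs α, tle I x z ∧ tle I y z)

include hsym hdet

lemma indep_of_enabled {γ : X} {a b : S} (ha : temb I a ∈ C.execs γ)
    (hb : temb I b ∈ C.execs γ) (hab : a ≠ b) : I a b := by
  obtain ⟨z, hz, ⟨z1, rfl⟩, hbz⟩ := hdet γ _ _ ha hb
  rcases tle_temb_mul hsym hbz with h | ⟨hcond, _⟩
  · exfalso
    have h1 := tcount_pos_of_tle h
    rw [tcount_temb] at h1
    simp [hab] at h1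
  · exact hcond a (by rw [tcount_temb]; simp)

lemma clique_exec {γ : X} (c : Clique I) (h : ∀ a ∈ c.1, temb I a ∈ C.execs γ) :
    cprod I c ∈ C.execs γ := by
  obtain ⟨s, hs⟩ := c
  induction s using Finset.induction_on with
  | empty =>
    show C.act (some γ) _ ≠ none
    have : cprod I ⟨(∅ : Finset S), hs⟩ = 1 := rfl
    rw [this, C.act_one]
    simp
  | @insert a s ha ih =>
    have hs' := isClique_mono hs (Finset.subset_insert a s)
    have hcs : cprod I ⟨s, hs'⟩ ∈ C.execs γ :=
      ih hs' (fun b hb => h b (Finset.mem_insert_of_mem hb))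
    have haen : temb I a ∈ C.execs γ := h a (Finset.mem_insert_self a s)
    obtain ⟨z, hz, ⟨w, rfl⟩, haz⟩ := hdet γ _ _ hcs haen
    rcases tle_temb_mul hsym haz with hle | ⟨_, hw⟩
    · exact absurd (mem_of_tle_temb_cprod hle) ha
    · obtain ⟨w', rfl⟩ := hw
      have heq : cprod I ⟨insert a s, hs⟩ = cprod I ⟨s, hs'⟩ * temb I a :=
        Finset.noncommProd_insert_of_notMem' s a (temb I) _ ha
      show C.act (some γ) _ ≠ none
      rw [heq]
      refine act_ne_none_left C (y := w') ?_
      rw [mul_assoc]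
      exact hz

lemma lemmaP :
    ∀ (l : List (Clique I)) (γ : X) (e : Finset S) (he : IsClique I e),
      List.Chain' (NormalPair I) l →
      C.act (some γ) ((l.map (cprod I)).prod) ≠ none →
      (∀ a ∈ e, temb I a ∈ C.execs γ) →
      (∀ d ∈ (l.head?), e ∩ d.1 = ∅ ∧ ∀ a ∈ e, ∀ b ∈ d.1, I a b) →
      C.act (some γ) (cprod I ⟨e, he⟩ * (l.map (cprod I)).prod) ≠ none := by
  intro l
  induction l with
  | nil =>
    intro γ e he _ _ hen _
    simpa [ConcurrentSystem.execs] using clique_exec C hsym hdet ⟨e, he⟩ hen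
  | cons d l ih =>
    intro γ e he hchain hex hen hhead
    obtain ⟨hinter, hindep⟩ := hhead d rfl
    have hnotin : ∀ a ∈ e, a ∉ d.1 := by
      intro a ha hd
      have : a ∈ e ∩ d.1 := Finset.mem_inter.mpr ⟨ha, hd⟩
      rw [hinter] at this
      exact absurd this (Finset.notMem_empty a)
    have hexd : C.act (some γ) (cprod I d) ≠ none := by
      refine act_ne_none_left C (y := (l.map (cprod I)).prod) ?_
      simpa [List.map_cons, List.prod_cons] using hex
    obtain ⟨γ', hγ'⟩ : ∃ γ', C.act (some γ) (cprod I d) = some γ' :=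
      Option.ne_none_iff_exists'.mp hexd
    have hex' : C.act (some γ') ((l.map (cprod I)).prod) ≠ none := by
      have h1 := hex
      rw [List.map_cons, List.prod_cons, C.act_mul, hγ'] at h1
      exact h1
    have hen' : ∀ a ∈ e, temb I a ∈ C.execs γ' := by
      intro a hae
      have hins_clique : IsClique I (insert a d.1) := by
        intro x hx y hy hxy
        simp only [Finset.coe_insert, Set.mem_insert_iff, Finset.mem_coe] at hx hy
        rcases hx with rfl | hx
        · rcases hy with rfl | hy
          · exact absurd rfl hxy
          · exact hindep _ hae _ hy
        · rcases hy with rfl | hy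
          · exact hsym (hindep _ hae _ hx)
          · exact d.2 hx hy hxy
      have hexi : cprod I ⟨insert a d.1, hins_clique⟩ ∈ C.execs γ := by
        refine clique_exec C hsym hdet _ ?_
        intro b hb
        rcases Finset.mem_insert.mp hb with rfl | hb
        · exact hen b hae
        · exact exec_of_tle C (tle_temb_cprod hb) hexd
      have heq : cprod I ⟨insert a d.1, hins_clique⟩ = cprod I d * temb I a :=
        Finset.noncommProd_insert_of_notMem' d.1 a (temb I) _ (hnotin a hae)
      have h2 : C.act (some γ) (cprod I d * temb I a) ≠ none := heq ▸ hexi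
      rw [C.act_mul, hγ'] at h2
      exact h2
    have hhead' : ∀ d₂ ∈ l.head?, e ∩ d₂.1 = ∅ ∧ ∀ a ∈ e, ∀ b ∈ d₂.1, I a b := by
      intro d₂ hd₂
      obtain ⟨l₂, rfl⟩ : ∃ l₂, l = d₂ :: l₂ := by
        cases l with
        | nil => exact absurd hd₂ (by simp)
        | cons d' l₂ =>
          have : d' = d₂ := by simpa using hd₂
          exact ⟨l₂, by rw [this]⟩
      have hnp : NormalPair I d d₂ := (List.isChain_cons_cons.mp hchain).1
      have hint2 : e ∩ d₂.1 = ∅ := by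
        rw [Finset.eq_empty_iff_forall_notMem]
        intro a ha
        obtain ⟨ha1, ha2⟩ := Finset.mem_inter.mp ha
        obtain ⟨b, hb, hnab⟩ := hnp a ha2
        exact hnab (hsym (hindep a ha1 b hb))
      refine ⟨hint2, ?_⟩
      intro a hae g hg
      have hg_en : temb I g ∈ C.execs γ' := by
        refine exec_of_tle C ?_ hex'
        obtain ⟨w, hw⟩ := tle_temb_cprod (I := I) hg
        exact ⟨w * (l₂.map (cprod I)).prod, by
          rw [List.map_cons, List.prod_cons, hw, mul_assoc]⟩
      have hne : a ≠ g := by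
        intro h
        subst h
        have : a ∈ e ∩ d₂.1 := Finset.mem_inter.mpr ⟨hae, hg⟩
        rw [hint2] at this
        exact absurd this (Finset.notMem_empty a)
      exact indep_of_enabled C hsym hdet (hen' a hae) hg_en hne
    have key := ih γ' e he (List.IsChain.tail hchain) hex' hen' hhead'
    have hcomm : Commute (cprod I ⟨e, he⟩) (cprod I d) :=
      commute_cprod hsym (fun a ha b hb => hindep a ha b hb)
    rw [List.map_cons, List.prod_cons, ← mul_assoc, hcomm.eq, mul_assoc,
      C.act_mul, hγ']
    exact key

end Sys
end Aux

end TraceDoc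

open TraceDoc in
/-- In a deterministic concurrent system, the sequence of maximal enabled
cliques starting from `α` is a normal sequence dominating (layer by layer)
every execution from `α`: it is the maximum generalized execution `T_α`. -/
theorem stmt18 {S X : Type*} [Fintype S] [Fintype X]
    (I : S → S → Prop) (hsym : Symmetric I) (hirr : ∀ a, ¬ I a a)
    (C : ConcurrentSystem I X)
    (hdet : ∀ (α : X) (x y : TraceMonoid I), x ∈ C.execs α → y ∈ C.execs α →
      ∃ z ∈ C.execs α, tle I x z ∧ tle I y z)
    (α : X) :
    ∃ (c : ℕ → Clique I) (A : ℕ → Option X),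
      A 0 = some α ∧
      (∀ i, A (i + 1) = C.act (A i) (cprod I (c i))) ∧
      (∀ i, A i ≠ none) ∧
      (∀ (i : ℕ) (a : S), a ∈ (c i).1 ↔ C.act (A i) (temb I a) ≠ none) ∧
      (∀ i, NormalPair I (c i) (c (i + 1))) ∧
      (∀ x ∈ C.execs α, ∀ l : List (Clique I),
        (∀ d ∈ l, d.1.Nonempty) → List.Chain' (NormalPair I) l →
        (l.map (cprod I)).prod = x →
        ∀ (j : ℕ) (hj : j < l.length), (l.get ⟨j, hj⟩).1 ⊆ (c j).1) := by
  classical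
  set E : Option X → Finset S :=
    fun o => Finset.univ.filter (fun a => C.act o (temb I a) ≠ none) with hE
  have hEmem : ∀ o a, a ∈ E o ↔ C.act o (temb I a) ≠ none := by
    intro o a; simp [hE]
  have hEclique : ∀ o, IsClique I (E o) := by
    intro o a ha b hb hab
    have ha' := (hEmem o a).mp (Finset.mem_coe.mp ha)
    have hb' := (hEmem o b).mp (Finset.mem_coe.mp hb)
    cases o with
    | none => exact absurd (C.act_bot _) ha'
    | some γ => exact indep_of_enabled C hsym hdet ha' hb' hab
  set cl : Option X → Clique I := fun o => ⟨E o, hEclique o⟩ with hcl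
  set A : ℕ → Option X :=
    fun n => Nat.rec (some α) (fun _ o => C.act o (cprod I (cl o))) n with hA
  have hA0 : A 0 = some α := rfl
  have hAs : ∀ i, A (i + 1) = C.act (A i) (cprod I (cl (A i))) := fun i => rfl
  have hAne : ∀ i, A i ≠ none := by
    intro i
    induction i with
    | zero => rw [hA0]; simp
    | succ i ihi =>
      obtain ⟨β, hβ⟩ := Option.ne_none_iff_exists'.mp ihi
      rw [hAs i, hβ]
      exact clique_exec C hsym hdet (cl (some β))
        (fun a ha => (hEmem (some β) a).mp ha)
  have hNP : ∀ i, NormalPair I (cl (A i)) (cl (A (i + 1))) := by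
    intro i b hb
    by_contra hno
    push_neg at hno
    obtain ⟨β, hβ⟩ := Option.ne_none_iff_exists'.mp (hAne i)
    rw [hβ] at hno
    have hb' : C.act (A (i + 1)) (temb I b) ≠ none := (hEmem _ b).mp hb
    rw [hAs i, hβ, ← C.act_mul] at hb'
    have hcomm : Commute (cprod I (cl (some β))) (temb I b) :=
      commute_cprod_temb hsym (fun a ha => hno a ha)
    rw [hcomm.eq, C.act_mul] at hb'
    have hben : C.act (some β) (temb I b) ≠ none := by
      intro h0; rw [h0, C.act_bot] at hb'; exact hb' rfl
    have hbmem : b ∈ E (some β) := (hEmem _ b).mpr hben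
    exact hirr b (hno b hbmem)
  have main : ∀ (l : List (Clique I)) (i : ℕ), List.Chain' (NormalPair I) l →
      C.act (A i) ((l.map (cprod I)).prod) ≠ none →
      ∀ j (hj : j < l.length), (l.get ⟨j, hj⟩).1 ⊆ (cl (A (i + j))).1 := by
    intro l
    induction l with
    | nil => intro i _ _ j hj; exact absurd hj (by simp)
    | cons d l ihl =>
      intro i hchain hex j hj
      obtain ⟨β, hβ⟩ := Option.ne_none_iff_exists'.mp (hAne i)
      rw [hβ] at hex
      have hdsub : d.1 ⊆ E (some β) := by
        intro a ha
        refine (hEmem _ a).mpr ?_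
        refine exec_of_tle C ?_ hex
        obtain ⟨w, hw⟩ := tle_temb_cprod (I := I) ha
        exact ⟨w * (l.map (cprod I)).prod, by
          rw [List.map_cons, List.prod_cons, hw, mul_assoc]⟩
      cases j with
      | zero =>
        have : A (i + 0) = some β := by rw [Nat.add_zero, hβ]
        rw [this]
        exact hdsub
      | succ j =>
        have he : IsClique I (E (some β) \ d.1) :=
          isClique_mono (hEclique _) (Finset.sdiff_subset)
        set e : Finset S := E (some β) \ d.1 with he_def
        have hnotin : ∀ a ∈ e, a ∉ d.1 := fun a ha => (Finset.mem_sdiff.mp ha).2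
        have hindep : ∀ a ∈ e, ∀ b ∈ d.1, I a b := by
          intro a ha b hb
          have hane : a ≠ b := fun h => hnotin a ha (h ▸ hb)
          exact hEclique (some β) (Finset.mem_coe.mpr (Finset.mem_sdiff.mp ha).1)
            (Finset.mem_coe.mpr (hdsub hb)) hane
        have hhead : ∀ d' ∈ (d :: l).head?, e ∩ d'.1 = ∅ ∧
            ∀ a ∈ e, ∀ b ∈ d'.1, I a b := by
          intro d' hd'
          have hdd : d = d' := by simpa using hd'
          subst hdd
          refine ⟨?_, hindep⟩
          rw [Finset.eq_empty_iff_forall_notMem]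
          intro a ha
          obtain ⟨h1, h2⟩ := Finset.mem_inter.mp ha
          exact hnotin a h1 h2
        have hP := lemmaP C hsym hdet (d :: l) β e he hchain hex
          (fun a ha => (hEmem _ a).mp (Finset.mem_sdiff.mp ha).1) hhead
        have hunion : (cl (some β)).1 = d.1 ∪ e := by
          show E (some β) = d.1 ∪ e
          rw [he_def, Finset.union_sdiff_of_subset hdsub]
        have hdisj : Disjoint d.1 e := Finset.disjoint_sdiff
        have hsplit : cprod I (cl (some β)) = cprod I d * cprod I ⟨e, he⟩ := by
          have h1 : cl (some β) = ⟨d.1 ∪ e, hunion ▸ (cl (some β)).2⟩ :=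
            Subtype.ext hunion
          rw [h1, cprod_union hdisj]
        have hkey : C.act (A (i + 1)) ((l.map (cprod I)).prod) ≠ none := by
          rw [hAs i, hβ, ← C.act_mul, hsplit]
          have hcomm : Commute (cprod I ⟨e, he⟩) (cprod I d) :=
            commute_cprod hsym hindep
          rw [show cprod I d * cprod I ⟨e, he⟩ * (List.map (cprod I) l).prod =
              cprod I ⟨e, he⟩ * (List.map (cprod I) (d :: l)).prod from by
            rw [List.map_cons, List.prod_cons, ← mul_assoc, hcomm.eq]]
          exact hP
        have hres := ihl (i + 1) (List.IsChain.tail hchain) hkey j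
          (by simpa using Nat.succ_lt_succ_iff.mp hj)
        have hidx : i + (j + 1) = (i + 1) + j := by omega
        rw [hidx]
        exact hres
  refine ⟨fun i => cl (A i), A, hA0, fun i => rfl, hAne,
    (fun i a => hEmem (A i) a), hNP, ?_⟩
  intro x hx l _ hchain hprod j hj
  have := main l 0 hchain (by rw [hprod]; exact hx) j hj
  simpa using this
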